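/- Congruence invariance of the geometric mean: if A, B are strictly accretive, G = A#B is the unique strictly accretive solution of GA^{-1}G = B, and X is any invertible matrix, then H = XᴴGX is the unique strictly accretive solution of H(XᴴAX)^{-1}H = XᴴBX. -/

import Mathlib

/-!
Congruence `M ↦ Xᴴ M X` by an invertible `X` is a bijection that preserves strict accretivity in
both directions, since the Hermitian part of `Xᴴ M X` is `Xᴴ (Hermitian part of M) X`, and it
transforms the equation: `(Xᴴ G X) (Xᴴ A X)⁻¹ (Xᴴ G X) = Xᴴ (G A⁻¹ G) X`. Hence it maps the
strictly accretive solutions for `(A, B)` bijectively onto those for `(Xᴴ A X, Xᴴ B X)`.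
-/

open Matrix
open scoped ComplexOrder

namespace Matrix

variable {m n 𝕜 R : Type*} [Fintype m]

lemma smul_add_conjTranspose_conjTranspose_mul_mul [CommRing R] [StarRing R]
    (c : R) (X : Matrix m n R) (M : Matrix m m R) :
    c • (Xᴴ * M * X + (Xᴴ * M * X)ᴴ) = Xᴴ * (c • (M + Mᴴ)) * X := by
  simp only [conjTranspose_mul, conjTranspose_conjTranspose, Matrix.mul_smul, Matrix.smul_mul,
    Matrix.mul_add, Matrix.add_mul, Matrix.mul_assoc]

variable [Fintype n]

def IsStrictlyAccretive [RCLike 𝕜] (M : Matrix n n 𝕜) : Prop :=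
  ((2⁻¹ : 𝕜) • (M + Mᴴ)).PosDef

variable [DecidableEq n]

lemma IsUnit.isStrictlyAccretive_conjTranspose_mul_mul_iff [RCLike 𝕜] {X M : Matrix n n 𝕜}
    (hX : IsUnit X) : IsStrictlyAccretive (Xᴴ * M * X) ↔ IsStrictlyAccretive M := by
  rw [IsStrictlyAccretive, smul_add_conjTranspose_conjTranspose_mul_mul]
  exact IsUnit.posDef_star_left_conjugate_iff hX

lemma mul_mul_mul_inv_mul_mul [CommRing R] {X Y : Matrix n n R} (hX : IsUnit X) (hY : IsUnit Y)
    (G A : Matrix n n R) :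
    (Y * G * X) * (Y * A * X)⁻¹ * (Y * G * X) = Y * (G * A⁻¹ * G) * X := by
  have hXd := (isUnit_iff_isUnit_det X).1 hX
  have hYd := (isUnit_iff_isUnit_det Y).1 hY
  simp only [mul_inv_rev, Matrix.mul_assoc, mul_nonsing_inv_cancel_left _ _ hXd,
    nonsing_inv_mul_cancel_left _ _ hYd]

lemma mul_mul_mul_inv_mul_mul_eq_iff [CommRing R] {X Y : Matrix n n R} (hX : IsUnit X)
    (hY : IsUnit Y) (G A B : Matrix n n R) :
    (Y * G * X) * (Y * A * X)⁻¹ * (Y * G * X) = Y * B * X ↔ G * A⁻¹ * G = B := by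
  rw [mul_mul_mul_inv_mul_mul hX hY, hX.mul_left_inj, hY.mul_right_inj]

end Matrix

lemma IsUnit.exists_mul_mul_eq {M : Type*} [Monoid M] {x y : M} (hx : IsUnit x) (hy : IsUnit y)
    (h : M) : ∃ g, x * g * y = h := by
  obtain ⟨u, rfl⟩ := hx
  obtain ⟨v, rfl⟩ := hy
  exact ⟨↑u⁻¹ * h * ↑v⁻¹, by simp [mul_assoc]⟩

theorem geometricMean_congruence_invariance_general {n : ℕ} (A B G X : Matrix (Fin n) (Fin n) ℂ)
    (hG : Matrix.PosDef ((2⁻¹ : ℂ) • (G + Gᴴ)))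
    (hGsol : G * A⁻¹ * G = B)
    (hGuniq : ∀ G' : Matrix (Fin n) (Fin n) ℂ,
      Matrix.PosDef ((2⁻¹ : ℂ) • (G' + G'ᴴ)) → G' * A⁻¹ * G' = B → G' = G)
    (hX : IsUnit X) :
    Matrix.PosDef ((2⁻¹ : ℂ) • ((Xᴴ * G * X) + (Xᴴ * G * X)ᴴ)) ∧
      (Xᴴ * G * X) * (Xᴴ * A * X)⁻¹ * (Xᴴ * G * X) = Xᴴ * B * X ∧
      ∀ H : Matrix (Fin n) (Fin n) ℂ,
        Matrix.PosDef ((2⁻¹ : ℂ) • (H + Hᴴ)) →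
        H * (Xᴴ * A * X)⁻¹ * H = Xᴴ * B * X → H = Xᴴ * G * X := by
  have hXH : IsUnit Xᴴ := (isUnit_conjTranspose X).2 hX
  refine ⟨hX.isStrictlyAccretive_conjTranspose_mul_mul_iff.2 hG,
    (mul_mul_mul_inv_mul_mul_eq_iff hX hXH G A B).2 hGsol, fun H hH hHsol => ?_⟩
  obtain ⟨G', rfl⟩ := hXH.exists_mul_mul_eq hX H
  rw [hGuniq G' (hX.isStrictlyAccretive_conjTranspose_mul_mul_iff.1 hH)
    ((mul_mul_mul_inv_mul_mul_eq_iff hX hXH G' A B).1 hHsol)]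

/-- Congruence invariance of the geometric mean: if `A, B` are strictly accretive,
`G = A#B` is the unique strictly accretive solution of `G A⁻¹ G = B`, and `X` is
invertible, then `H = Xᴴ G X` is the unique strictly accretive solution of
`H (Xᴴ A X)⁻¹ H = Xᴴ B X`. -/
theorem geometricMean_congruence_invariance {n : ℕ} (A B G X : Matrix (Fin n) (Fin n) ℂ)
    (hA : Matrix.PosDef ((2⁻¹ : ℂ) • (A + Aᴴ)))
    (hB : Matrix.PosDef ((2⁻¹ : ℂ) • (B + Bᴴ)))
    (hG : Matrix.PosDef ((2⁻¹ : ℂ) • (G + Gᴴ)))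
    (hGsol : G * A⁻¹ * G = B)
    (hGuniq : ∀ G' : Matrix (Fin n) (Fin n) ℂ,
      Matrix.PosDef ((2⁻¹ : ℂ) • (G' + G'ᴴ)) → G' * A⁻¹ * G' = B → G' = G)
    (hX : IsUnit X) :
    Matrix.PosDef ((2⁻¹ : ℂ) • ((Xᴴ * G * X) + (Xᴴ * G * X)ᴴ)) ∧
      (Xᴴ * G * X) * (Xᴴ * A * X)⁻¹ * (Xᴴ * G * X) = Xᴴ * B * X ∧
      ∀ H : Matrix (Fin n) (Fin n) ℂ,
        Matrix.PosDef ((2⁻¹ : ℂ) • (H + Hᴴ)) →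
        H * (Xᴴ * A * X)⁻¹ * H = Xᴴ * B * X → H = Xᴴ * G * X :=
  geometricMean_congruence_invariance_general A B G X hG hGsol hGuniq hX
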